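/- Let 𝒢 = {G_1,…,G_K} be a partition of {1,…,n} with minimum cluster size m and characteristic matrix B*. For any symmetric matrix W ∈ ℝ^{n×n} and every B ∈ C: |⟨W, B* − B⟩| ≤ 6·|B*W|_∞ · Σ_{1 ≤ k ≠ l ≤ K} |B_{G_k G_l}|_1 + |W|_op · ( (1/m)·Σ_{1 ≤ k ≠ l ≤ K} |B_{G_k G_l}|_1 + (tr(B) − K) ). -/

import Mathlib

open MeasureTheory ProbabilityTheory Matrix Real

noncomputable section

namespace Clustering

/-- Euclidean norm of a (finitely indexed) real vector. -/
def vnorm {ι : Type*} [Fintype ι] (v : ι → ℝ) : ℝ := Real.sqrt (∑ i, v i ^ 2)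

/-- Euclidean inner product. -/
def vdot {ι : Type*} [Fintype ι] (u v : ι → ℝ) : ℝ := ∑ i, u i * v i

/-- Frobenius norm of a matrix. -/
def frobNorm {ι κ : Type*} [Fintype ι] [Fintype κ] (M : Matrix ι κ ℝ) : ℝ :=
  Real.sqrt (∑ i, ∑ j, M i j ^ 2)

/-- Operator (`ℓ₂ → ℓ₂` spectral) norm of a matrix. -/
def opNorm {ι κ : Type*} [Fintype ι] [Fintype κ] (M : Matrix ι κ ℝ) : ℝ :=
  sSup {r | ∃ x : κ → ℝ, vnorm x ≤ 1 ∧ r = vnorm (M.mulVec x)}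

/-- Nuclear norm: the sum of the singular values, i.e. of the square roots of the
eigenvalues of `Mᴴ * M`. -/
def nuclearNorm {ι : Type*} [Fintype ι] [DecidableEq ι] (M : Matrix ι ι ℝ) : ℝ :=
  ∑ i, Real.sqrt ((Matrix.isHermitian_conjTranspose_mul_self M).eigenvalues i)

/-- Entrywise supremum norm. -/
def infNorm {ι κ : Type*} [Fintype ι] [Fintype κ] (M : Matrix ι κ ℝ) : ℝ :=
  ⨆ i, ⨆ j, |M i j|

/-- Variation semi-norm of (the diagonal of) a matrix: the difference between the largest
and the smallest diagonal entry. -/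
def varSeminorm {ι : Type*} [Fintype ι] (M : Matrix ι ι ℝ) : ℝ :=
  (⨆ i, M i i) - ⨅ i, M i i

/-- Frobenius (entrywise) inner product of two square matrices. -/
def mip {ι : Type*} [Fintype ι] (A B : Matrix ι ι ℝ) : ℝ := ∑ a, ∑ b, A a b * B a b

/-- `G` is a partition of `{1,…,n}` into `K` (nonempty) groups. -/
def IsPartition {n K : ℕ} (G : Fin K → Finset (Fin n)) : Prop :=
  (∀ a : Fin n, ∃! k, a ∈ G k) ∧ ∀ k, (G k).Nonempty

/-- Characteristic matrix `B*` of a partition. -/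
def charMatrix {n K : ℕ} (G : Fin K → Finset (Fin n)) : Matrix (Fin n) (Fin n) ℝ :=
  fun a b => ∑ k, if a ∈ G k ∧ b ∈ G k then ((G k).card : ℝ)⁻¹ else 0

/-- Minimal cluster size `m`. -/
def minCard {n K : ℕ} (G : Fin K → Finset (Fin n)) : ℕ := sInf {m | ∃ k, m = (G k).card}

/-- `|B_{G_k G_l}|₁`, the entrywise `ℓ¹`-norm of block `(k,l)` of `B`. -/
def blockL1 {n K : ℕ} (G : Fin K → Finset (Fin n)) (k l : Fin K)
    (B : Matrix (Fin n) (Fin n) ℝ) : ℝ :=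
  ∑ a ∈ G k, ∑ b ∈ G l, |B a b|

/-- `∑_{1 ≤ k ≠ l ≤ K} |B_{G_k G_l}|₁`. -/
def offDiagSum {n K : ℕ} (G : Fin K → Finset (Fin n)) (B : Matrix (Fin n) (Fin n) ℝ) : ℝ :=
  ∑ k, ∑ l, if k = l then 0 else blockL1 G k l B

/-- The (population) means `ν` are `(𝒢, μ, δ)`-clustered. -/
def IsClustered {n p K : ℕ} (ν : Fin n → Fin p → ℝ) (G : Fin K → Finset (Fin n))
    (μcl : Fin K → Fin p → ℝ) (δ : ℝ) : Prop :=
  IsPartition G ∧ 0 ≤ δ ∧ ∀ k, ∀ a ∈ G k, vnorm (fun i => ν a i - μcl k i) ≤ δ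

/-- Separation `Δ(μ) = min_{k ≠ l} |μ_k - μ_l|₂` between the cluster means. -/
def Delta {p K : ℕ} (μcl : Fin K → Fin p → ℝ) : ℝ :=
  sInf {r | ∃ k l : Fin K, k ≠ l ∧ r = vnorm (fun i => μcl k i - μcl l i)}

variable {Ω : Type*} [MeasurableSpace Ω]

/-- Mean (expectation) of a random vector, componentwise. -/
def mean {ι : Type*} [Fintype ι] (P : Measure Ω) (X : Ω → ι → ℝ) : ι → ℝ :=
  fun i => ∫ ω, X ω i ∂P

/-- `Y ~ subg(S)`: `Y` is subgaussian with variance-bounding matrix `S`. -/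
def IsSubg {ι : Type*} [Fintype ι] (P : Measure Ω) (Y : Ω → ι → ℝ)
    (S : Matrix ι ι ℝ) : Prop :=
  ∀ x : ι → ℝ,
    ∫ ω, Real.exp (vdot x fun i => Y ω i - mean P Y i) ∂P ≤
      Real.exp (vdot x (S.mulVec x) / 2)

/-- Observed Gram matrix `Λ̂`. -/
def gramHat {n p : ℕ} (X : Fin n → Ω → Fin p → ℝ) (ω : Ω) : Matrix (Fin n) (Fin n) ℝ :=
  fun a b => vdot (X a ω) (X b ω)

/-- Noise `E_a = X_a - ν_a`. -/
def noiseE {n p : ℕ} (P : Measure Ω) (X : Fin n → Ω → Fin p → ℝ) (a : Fin n) (ω : Ω) :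
    Fin p → ℝ := fun i => X a ω i - mean P (X a) i

/-- `Γ = Diag(E[|X_a − ν_a|₂²])ₐ`. -/
def gammaMat {n p : ℕ} (P : Measure Ω) (X : Fin n → Ω → Fin p → ℝ) :
    Matrix (Fin n) (Fin n) ℝ :=
  Matrix.diagonal fun a => ∫ ω, vnorm (noiseE P X a ω) ^ 2 ∂P

/-- `(W₄)_{ab} = ⟨E_a, E_b⟩ − Γ_{ab}`. -/
def W4mat {n p : ℕ} (P : Measure Ω) (X : Fin n → Ω → Fin p → ℝ) (ω : Ω) :
    Matrix (Fin n) (Fin n) ℝ :=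
  fun a b => vdot (noiseE P X a ω) (noiseE P X b ω) - gammaMat P X a b

/-- `σ² := maxₐ |Σ_a|_op`. -/
def sigma2 {n p : ℕ} (Sg : Fin n → Matrix (Fin p) (Fin p) ℝ) : ℝ := ⨆ a, opNorm (Sg a)

/-- `𝒱² := maxₐ |Σ_a|_F`. -/
def Vfrob2 {n p : ℕ} (Sg : Fin n → Matrix (Fin p) (Fin p) ℝ) : ℝ := ⨆ a, frobNorm (Sg a)

/-- `γ² := maxₐ |Σ_a|_*`. -/
def gamma2 {n p : ℕ} (Sg : Fin n → Matrix (Fin p) (Fin p) ℝ) : ℝ := ⨆ a, nuclearNorm (Sg a)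

/-- `σ_k² := max_{a ∈ G_k} |Σ_a|_op`. -/
def sigma2On {n p K : ℕ} (Sg : Fin n → Matrix (Fin p) (Fin p) ℝ)
    (G : Fin K → Finset (Fin n)) (k : Fin K) : ℝ :=
  ⨆ a : {a // a ∈ G k}, opNorm (Sg a.1)

/-- `V(a,b) = max_{(c,d) ∈ ([n]∖{a,b})²} |⟨X_a − X_b, (X_c − X_d)/|X_c − X_d|₂⟩|`. -/
def Vstat {n p : ℕ} (X : Fin n → Ω → Fin p → ℝ) (ω : Ω) (a b : Fin n) : ℝ :=
  ⨆ c : Fin n, ⨆ d : Fin n,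
    if c ≠ a ∧ c ≠ b ∧ d ≠ a ∧ d ≠ b then
      |vdot (fun i => X a ω i - X b ω i)
          (fun i => (X c ω i - X d ω i) / vnorm (fun j => X c ω j - X d ω j))|
    else 0

/-- A minimizer of `f` over the finite set `s`. -/
def argminOn {n : ℕ} [NeZero n] (s : Finset (Fin n)) (f : Fin n → ℝ) : Fin n :=
  if h : s.Nonempty then (Finset.exists_min_image s f h).choose else 0

/-- `b₁ = argmin_{b ≠ a} V(a,b)`. -/
def bOne {n p : ℕ} [NeZero n] (X : Fin n → Ω → Fin p → ℝ) (ω : Ω) (a : Fin n) : Fin n :=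
  argminOn (Finset.univ.erase a) fun b => Vstat X ω a b

/-- `b₂ = argmin_{b ∉ {a, b₁}} V(a,b)`. -/
def bTwo {n p : ℕ} [NeZero n] (X : Fin n → Ω → Fin p → ℝ) (ω : Ω) (a : Fin n) : Fin n :=
  argminOn ((Finset.univ.erase a).erase (bOne X ω a)) fun b => Vstat X ω a b

/-- The corrected estimator `Γ̂^corr = Diag(⟨X_a − X_{b₁}, X_a − X_{b₂}⟩)ₐ`. -/
def gammaCorr {n p : ℕ} [NeZero n] (X : Fin n → Ω → Fin p → ℝ) (ω : Ω) :
    Matrix (Fin n) (Fin n) ℝ :=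
  Matrix.diagonal fun a =>
    vdot (fun i => X a ω i - X (bOne X ω a) ω i) fun i => X a ω i - X (bTwo X ω a) ω i

/-- `C_K^{0,1}`. -/
def CK01 (n K : ℕ) : Set (Matrix (Fin n) (Fin n) ℝ) :=
  {B | (∀ a b, 0 ≤ B a b) ∧ B.IsSymm ∧ B.trace = (K : ℝ) ∧
    (B.mulVec fun _ => 1) = (fun _ => 1) ∧ B * B = B}

/-- `C_K`. -/
def CKset (n K : ℕ) : Set (Matrix (Fin n) (Fin n) ℝ) :=
  {B | (∀ a b, 0 ≤ B a b) ∧ B.IsSymm ∧ B.trace = (K : ℝ) ∧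
    (B.mulVec fun _ => 1) = (fun _ => 1) ∧ B.PosSemidef}

/-- `C = ⋃_K C_K`. -/
def Cset (n : ℕ) : Set (Matrix (Fin n) (Fin n) ℝ) := ⋃ K : ℕ, CKset n K

/-- `B₀` is the unique maximizer of `B ↦ ⟨M, B⟩` over `S`. -/
def UniqueMaxOn {n : ℕ} (M : Matrix (Fin n) (Fin n) ℝ)
    (S : Set (Matrix (Fin n) (Fin n) ℝ)) (B0 : Matrix (Fin n) (Fin n) ℝ) : Prop :=
  B0 ∈ S ∧ ∀ B ∈ S, B ≠ B0 → mip M B < mip M B0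

/-- `B₀` is the unique maximizer of the `κ`-penalized objective `B ↦ ⟨M, B⟩ − κ·tr B` over `S`. -/
def UniqueMaxPen {n : ℕ} (M : Matrix (Fin n) (Fin n) ℝ) (κ : ℝ)
    (S : Set (Matrix (Fin n) (Fin n) ℝ)) (B0 : Matrix (Fin n) (Fin n) ℝ) : Prop :=
  B0 ∈ S ∧ ∀ B ∈ S, B ≠ B0 → mip M B - κ * B.trace < mip M B0 - κ * B0.trace


/-- Population Gram matrix `Λ = (⟨ν_a, ν_b⟩)_{a,b}`. -/
def gramMean {n p : ℕ} (P : Measure Ω) (X : Fin n → Ω → Fin p → ℝ) :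
    Matrix (Fin n) (Fin n) ℝ :=
  fun a b => vdot (mean P (X a)) (mean P (X b))

/-!
Write `P = B*` and `D = P - B`. Since `W`, `P`, `B` are symmetric and `P² = P`, splitting
`W = PW + (1 - P)WP + (1 - P)W(1 - P)` gives `⟨W, D⟩ = ⟨N, D⟩ - ⟨W, S⟩` with
`N = PW + PW(1 - P)` and `S = (1 - P)B(1 - P)`.

`S` is positive semidefinite, so `|⟨W, S⟩| ≤ |W|_op tr S`, and
`tr S = tr B - K + ⟨P, D⟩ ≤ tr B - K + (1/m) Σ_{k ≠ l} |B_{G_k G_l}|₁`.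

Since `PN = N`, `⟨N, D⟩ = ⟨N, PD⟩`; the entries of `N = 2PW - PWP` are at most `3|PW|_∞`, and
on each block `PD` averages the column sums `Σ_{e ∈ G_k} D_{eb} = 1[b ∈ G_k] - Σ_{e ∈ G_k} B_{eb}`,
whose absolute values add up to twice the mass of column `b` of `B` outside the cluster of `b`.
-/

section InnerProduct

variable {ι : Type*} [Fintype ι]

lemma mip_eq_trace_transpose_mul [DecidableEq ι] (A B : Matrix ι ι ℝ) :
    mip A B = (Aᵀ * B).trace := by
  simp only [mip, Matrix.trace, Matrix.diag_apply, Matrix.mul_apply, Matrix.transpose_apply]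
  exact Finset.sum_comm

lemma mip_transpose_transpose (A B : Matrix ι ι ℝ) : mip Aᵀ Bᵀ = mip A B :=
  Finset.sum_comm

lemma mip_add_left (A C D : Matrix ι ι ℝ) : mip (A + C) D = mip A D + mip C D := by
  simp only [mip, Matrix.add_apply, add_mul, Finset.sum_add_distrib]

lemma mip_neg_right (A D : Matrix ι ι ℝ) : mip A (-D) = -mip A D := by
  simp only [mip, Matrix.neg_apply, mul_neg, Finset.sum_neg_distrib]

lemma mip_sum_right {κ : Type*} (s : Finset κ) (W : Matrix ι ι ℝ) (S : κ → Matrix ι ι ℝ) :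
    mip W (∑ i ∈ s, S i) = ∑ i ∈ s, mip W (S i) := by
  simp only [mip, Matrix.sum_apply, Finset.mul_sum]
  exact (Finset.sum_congr rfl fun _ _ => Finset.sum_comm).trans Finset.sum_comm

lemma mip_vecMulVec (W : Matrix ι ι ℝ) (u v : ι → ℝ) :
    mip W (Matrix.vecMulVec u v) = u ⬝ᵥ W *ᵥ v := by
  simp only [mip, Matrix.vecMulVec_apply, dotProduct, Matrix.mulVec, Finset.mul_sum]
  exact Finset.sum_congr rfl fun _ _ => Finset.sum_congr rfl fun _ _ => by ring

variable [DecidableEq ι]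

lemma mip_mul_left (A M D : Matrix ι ι ℝ) : mip (A * M) D = mip M (Aᵀ * D) := by
  rw [mip_eq_trace_transpose_mul, mip_eq_trace_transpose_mul, Matrix.transpose_mul,
    Matrix.mul_assoc]

lemma mip_mul_right (M A D : Matrix ι ι ℝ) : mip (M * A) D = mip M (D * Aᵀ) := by
  rw [mip_eq_trace_transpose_mul, mip_eq_trace_transpose_mul, Matrix.transpose_mul,
    Matrix.mul_assoc, Matrix.trace_mul_comm, Matrix.mul_assoc]

end InnerProduct

section Projection

variable {ι : Type*} [Fintype ι] [DecidableEq ι] {P W B : Matrix ι ι ℝ}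

lemma mip_sub_eq_of_idempotent (hP : Pᵀ = P) (hPP : P * P = P) (hW : Wᵀ = W) (hB : Bᵀ = B) :
    mip W (P - B) =
      mip (P * W + P * W * (1 - P)) (P - B) - mip W ((1 - P) * B * (1 - P)) := by
  set Q : Matrix ι ι ℝ := 1 - P
  have hQ : Qᵀ = Q := by rw [Matrix.transpose_sub, Matrix.transpose_one, hP]
  have hQP : Q * P = 0 := by rw [Matrix.sub_mul, Matrix.one_mul, hPP, sub_self]
  have hsplit : W = P * W + Q * W * P + Q * W * Q := by simp only [Q]; noncomm_ring
  clear_value Q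
  have hD : (P - B)ᵀ = P - B := by rw [Matrix.transpose_sub, hP, hB]
  have hcross : mip (Q * W * P) (P - B) = mip (P * W * Q) (P - B) := by
    rw [← mip_transpose_transpose, Matrix.transpose_mul, Matrix.transpose_mul, hQ, hW, hP, hD,
      Matrix.mul_assoc]
  have hcompress : mip (Q * W * Q) (P - B) = -mip W (Q * B * Q) := by
    have : Q * (P - B) * Q = -(Q * B * Q) := by
      rw [Matrix.mul_sub Q P B, hQP, zero_sub, Matrix.neg_mul]
    rw [mip_mul_right, mip_mul_left, hQ, ← Matrix.mul_assoc, this, mip_neg_right]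
  conv_lhs => rw [hsplit]
  rw [mip_add_left, mip_add_left, hcross, hcompress, mip_add_left]
  ring

lemma trace_compress_eq (hP : Pᵀ = P) (hPP : P * P = P) :
    ((1 - P) * B * (1 - P)).trace = B.trace - P.trace + mip P (P - B) := by
  have hQQ : (1 - P) * (1 - P) = 1 - P := by
    rw [Matrix.sub_mul, Matrix.mul_sub, Matrix.mul_sub, hPP]; simp
  rw [Matrix.trace_mul_cycle, hQQ, mip_eq_trace_transpose_mul, hP, Matrix.mul_sub, hPP,
    Matrix.sub_mul, Matrix.one_mul, Matrix.trace_sub, Matrix.trace_sub]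
  ring

lemma posSemidef_compress (hP : Pᵀ = P) (hB : B.PosSemidef) :
    ((1 - P) * B * (1 - P)).PosSemidef := by
  have hQ : (1 - P)ᴴ = 1 - P := by
    rw [Matrix.conjTranspose_eq_transpose_of_trivial, Matrix.transpose_sub, Matrix.transpose_one,
      hP]
  have h := hB.mul_mul_conjTranspose_same (1 - P)
  rwa [hQ] at h

end Projection

section OperatorNorm

variable {ι : Type*} [Fintype ι]

lemma vnorm_eq_norm_toLp (v : ι → ℝ) : vnorm v = ‖WithLp.toLp 2 v‖ := by
  simp [vnorm, EuclideanSpace.norm_eq]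

variable [DecidableEq ι]

lemma opNorm_eq_norm_toEuclideanCLM (M : Matrix ι ι ℝ) :
    opNorm M = ‖Matrix.toEuclideanCLM (𝕜 := ℝ) M‖ := by
  rw [← ContinuousLinearMap.sSup_unitClosedBall_eq_norm, opNorm]
  congr 1
  ext r
  simp only [Set.mem_ofPred_eq, Set.mem_image, Metric.mem_closedBall, dist_zero_right]
  constructor
  · rintro ⟨x, hx, rfl⟩
    exact ⟨WithLp.toLp 2 x, by rwa [← vnorm_eq_norm_toLp], by simp [vnorm_eq_norm_toLp]⟩
  · rintro ⟨x, hx, rfl⟩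
    exact ⟨x.ofLp, by rwa [vnorm_eq_norm_toLp], by rw [vnorm_eq_norm_toLp]; rfl⟩

lemma opNorm_nonneg (M : Matrix ι ι ℝ) : 0 ≤ opNorm M := by
  rw [opNorm_eq_norm_toEuclideanCLM]
  exact norm_nonneg _

open scoped RealInnerProductSpace in
lemma abs_dotProduct_mulVec_self_le (M : Matrix ι ι ℝ) (x : ι → ℝ) :
    |x ⬝ᵥ M *ᵥ x| ≤ opNorm M * (x ⬝ᵥ x) := by
  set T := Matrix.toEuclideanCLM (𝕜 := ℝ) M
  set y := WithLp.toLp 2 x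
  have hxx : x ⬝ᵥ x = ‖y‖ ^ 2 := by
    rw [← real_inner_self_eq_norm_sq, EuclideanSpace.inner_toLp_toLp]
    simp
  rw [← Matrix.inner_toEuclideanCLM, hxx, opNorm_eq_norm_toEuclideanCLM]
  calc |⟪y, T y⟫| ≤ ‖y‖ * ‖T y‖ := abs_real_inner_le_norm _ _
    _ ≤ ‖y‖ * (‖T‖ * ‖y‖) := by gcongr; exact T.le_opNorm y
    _ = ‖T‖ * ‖y‖ ^ 2 := by ring

lemma abs_mip_le_opNorm_mul_trace (W S : Matrix ι ι ℝ) (hS : S.PosSemidef) :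
    |mip W S| ≤ opNorm W * S.trace := by
  obtain ⟨m, v, rfl⟩ := Matrix.posSemidef_iff_eq_sum_vecMulVec.mp hS
  simp only [star_trivial]
  rw [mip_sum_right, Matrix.trace_sum, Finset.mul_sum]
  refine (Finset.abs_sum_le_sum_abs _ _).trans (Finset.sum_le_sum fun i _ => ?_)
  rw [mip_vecMulVec, Matrix.trace_vecMulVec]
  exact abs_dotProduct_mulVec_self_le W (v i)

end OperatorNorm

section Entrywise

variable {ι κ ν : Type*} [Fintype ι] [Fintype κ]

lemma abs_apply_le_infNorm (M : Matrix ι κ ℝ) (a : ι) (b : κ) : |M a b| ≤ infNorm M :=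
  (le_ciSup (Set.finite_range _).bddAbove b).trans
    (le_ciSup (f := fun i => ⨆ j, |M i j|) (Set.finite_range _).bddAbove a)

lemma abs_mul_apply_le_infNorm (A : Matrix ι κ ℝ) {P : Matrix κ ν ℝ} (hP : ∀ e b, 0 ≤ P e b)
    (hPcol : ∀ b, ∑ e, P e b = 1) (a : ι) (b : ν) : |(A * P) a b| ≤ infNorm A :=
  calc |(A * P) a b| ≤ ∑ e, |A a e| * P e b := by
        rw [Matrix.mul_apply]
        refine (Finset.abs_sum_le_sum_abs _ _).trans_eq (Finset.sum_congr rfl fun e _ => ?_)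
        rw [abs_mul, abs_of_nonneg (hP e b)]
    _ ≤ ∑ e, infNorm A * P e b := by
        gcongr with e; exacts [hP e b, abs_apply_le_infNorm A a e]
    _ = infNorm A := by rw [← Finset.mul_sum, hPcol, mul_one]

lemma abs_mip_le_of_abs_apply_le {A X : Matrix ι ι ℝ} {c : ℝ} (hA : ∀ a b, |A a b| ≤ c) :
    |mip A X| ≤ c * ∑ a, ∑ b, |X a b| := by
  simp only [mip, Finset.mul_sum]
  refine (Finset.abs_sum_le_sum_abs _ _).trans (Finset.sum_le_sum fun a _ => ?_)
  refine (Finset.abs_sum_le_sum_abs _ _).trans (Finset.sum_le_sum fun b _ => ?_)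
  rw [abs_mul]
  exact mul_le_mul_of_nonneg_right (hA a b) (abs_nonneg _)

end Entrywise

def crossMass {n K : ℕ} (G : Fin K → Finset (Fin n)) (B : Matrix (Fin n) (Fin n) ℝ)
    (b : Fin n) : ℝ :=
  ∑ k, if b ∈ G k then 0 else ∑ e ∈ G k, B e b

section CharMatrix

variable {n K : ℕ} {G : Fin K → Finset (Fin n)}

lemma charMatrix_transpose : (charMatrix G)ᵀ = charMatrix G := by
  ext a b
  simp only [Matrix.transpose_apply, charMatrix, and_comm]

lemma charMatrix_nonneg (a b : Fin n) : 0 ≤ charMatrix G a b :=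
  Finset.sum_nonneg fun _ _ => by split_ifs <;> positivity

lemma crossMass_nonneg {B : Matrix (Fin n) (Fin n) ℝ} (hB : ∀ a b, 0 ≤ B a b) (b : Fin n) :
    0 ≤ crossMass G B b :=
  Finset.sum_nonneg fun _ _ => by
    split_ifs
    exacts [le_rfl, Finset.sum_nonneg fun e _ => hB e b]

end CharMatrix

namespace IsPartition

variable {n K : ℕ} {G : Fin K → Finset (Fin n)}

lemma mem_iff_eq (hG : IsPartition G) {a : Fin n} {k l : Fin K} (ha : a ∈ G l) :
    a ∈ G k ↔ k = l :=
  ⟨fun hk => (hG.1 a).unique hk ha, fun h => h ▸ ha⟩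

lemma sum_ite_mem {M : Type*} [AddCommMonoid M] (hG : IsPartition G) {a : Fin n} {l : Fin K}
    (ha : a ∈ G l) (f : Fin K → M) : ∑ k, (if a ∈ G k then f k else 0) = f l := by
  simp only [hG.mem_iff_eq ha, Finset.sum_ite_eq', Finset.mem_univ, if_true]

lemma sum_sum_eq_sum {M : Type*} [AddCommMonoid M] (hG : IsPartition G) (f : Fin n → M) :
    ∑ k, ∑ a ∈ G k, f a = ∑ a, f a := by
  rw [← Finset.sum_biUnion]
  · congr 1
    ext a
    simpa using (hG.1 a).exists
  · intro k _ l _ hkl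
    exact Finset.disjoint_left.2 fun a hk hl => hkl ((hG.mem_iff_eq hl).1 hk)

lemma card_mul_inv_card (hG : IsPartition G) (k : Fin K) :
    ((G k).card : ℝ) * ((G k).card : ℝ)⁻¹ = 1 :=
  mul_inv_cancel₀ (Nat.cast_ne_zero.2 (hG.2 k).card_pos.ne')

lemma inv_card_le_inv_minCard (hG : IsPartition G) (k : Fin K) :
    ((G k).card : ℝ)⁻¹ ≤ (minCard G : ℝ)⁻¹ := by
  obtain ⟨l, hl⟩ : minCard G ∈ {m | ∃ k, m = (G k).card} := Nat.sInf_mem ⟨_, k, rfl⟩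
  have hpos : 0 < minCard G := hl ▸ (hG.2 l).card_pos
  have hmin : minCard G ≤ (G k).card := Nat.sInf_le (s := {m | ∃ k, m = (G k).card}) ⟨k, rfl⟩
  exact inv_anti₀ (by exact_mod_cast hpos) (by exact_mod_cast hmin)

lemma charMatrix_apply_of_mem (hG : IsPartition G) {a : Fin n} {k : Fin K} (ha : a ∈ G k)
    (b : Fin n) : charMatrix G a b = if b ∈ G k then ((G k).card : ℝ)⁻¹ else 0 := by
  simp only [charMatrix, hG.mem_iff_eq ha, ite_and, Finset.sum_ite_eq', Finset.mem_univ, if_true]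

lemma sum_charMatrix_apply (hG : IsPartition G) (k : Fin K) (b : Fin n) :
    ∑ e ∈ G k, charMatrix G e b = if b ∈ G k then 1 else 0 := by
  rw [Finset.sum_congr rfl fun e he => hG.charMatrix_apply_of_mem he b, Finset.sum_const,
    nsmul_eq_mul]
  split_ifs
  exacts [hG.card_mul_inv_card k, mul_zero _]

lemma sum_charMatrix_apply_right (hG : IsPartition G) (a : Fin n) :
    ∑ b, charMatrix G a b = 1 := by
  obtain ⟨k, hk⟩ := (hG.1 a).exists
  simp only [hG.charMatrix_apply_of_mem hk, Finset.sum_ite_mem, Finset.univ_inter,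
    Finset.sum_const, nsmul_eq_mul, hG.card_mul_inv_card]

lemma sum_charMatrix_apply_left (hG : IsPartition G) (b : Fin n) :
    ∑ a, charMatrix G a b = 1 :=
  (Finset.sum_congr rfl fun a _ => congrFun₂ (charMatrix_transpose (G := G)) b a).trans
    (hG.sum_charMatrix_apply_right b)

lemma charMatrix_mul_apply_of_mem {ι : Type*} (hG : IsPartition G) {a : Fin n} {k : Fin K}
    (ha : a ∈ G k) (X : Matrix (Fin n) ι ℝ) (b : ι) :
    (charMatrix G * X) a b = ((G k).card : ℝ)⁻¹ * ∑ e ∈ G k, X e b := by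
  simp only [Matrix.mul_apply, hG.charMatrix_apply_of_mem ha, ite_mul, zero_mul,
    Finset.sum_ite_mem, Finset.univ_inter, Finset.mul_sum]

lemma charMatrix_mul_self (hG : IsPartition G) : charMatrix G * charMatrix G = charMatrix G := by
  ext a b
  obtain ⟨k, hk⟩ := (hG.1 a).exists
  rw [hG.charMatrix_mul_apply_of_mem hk, hG.sum_charMatrix_apply, hG.charMatrix_apply_of_mem hk]
  split_ifs <;> simp

lemma trace_charMatrix (hG : IsPartition G) : (charMatrix G).trace = K := by
  rw [Matrix.trace, ← hG.sum_sum_eq_sum]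
  calc ∑ k, ∑ a ∈ G k, charMatrix G a a = ∑ k : Fin K, (1 : ℝ) :=
        Finset.sum_congr rfl fun k _ => by
          rw [Finset.sum_congr rfl fun a ha => by rw [hG.charMatrix_apply_of_mem ha, if_pos ha],
            Finset.sum_const, nsmul_eq_mul, hG.card_mul_inv_card]
    _ = K := by simp

variable {B : Matrix (Fin n) (Fin n) ℝ}

lemma offDiagSum_eq_sum_crossMass (hG : IsPartition G) (hB : ∀ a b, 0 ≤ B a b) :
    offDiagSum G B = ∑ b, crossMass G B b := by
  rw [← hG.sum_sum_eq_sum, offDiagSum, Finset.sum_comm]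
  refine Finset.sum_congr rfl fun l _ => ?_
  calc ∑ k, (if k = l then 0 else blockL1 G k l B)
      = ∑ k, ∑ b ∈ G l, (if k = l then 0 else ∑ e ∈ G k, B e b) := by
        refine Finset.sum_congr rfl fun k _ => ?_
        split_ifs
        · simp
        · rw [blockL1, Finset.sum_comm]
          simp only [abs_of_nonneg (hB _ _)]
    _ = ∑ b ∈ G l, crossMass G B b := by
        rw [Finset.sum_comm]
        refine Finset.sum_congr rfl fun b hb => ?_
        simp only [crossMass, hG.mem_iff_eq hb]

lemma sum_charMatrix_sub_apply_of_mem (hG : IsPartition G) (hB1 : ∀ b, ∑ e, B e b = 1)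
    {b : Fin n} {l : Fin K} (hb : b ∈ G l) :
    ∑ e ∈ G l, (charMatrix G - B) e b = crossMass G B b := by
  have hsplit : ∑ e ∈ G l, B e b + crossMass G B b = 1 := by
    rw [← hB1 b, ← hG.sum_sum_eq_sum, ← hG.sum_ite_mem hb (fun k => ∑ e ∈ G k, B e b),
      crossMass, ← Finset.sum_add_distrib]
    exact Finset.sum_congr rfl fun k _ => by split_ifs <;> simp
  simp only [Matrix.sub_apply, Finset.sum_sub_distrib, hG.sum_charMatrix_apply, if_pos hb]
  linarith

lemma sum_abs_sum_charMatrix_sub_apply (hG : IsPartition G) (hB : ∀ a b, 0 ≤ B a b)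
    (hB1 : ∀ b, ∑ e, B e b = 1) (b : Fin n) :
    ∑ k, |∑ e ∈ G k, (charMatrix G - B) e b| = 2 * crossMass G B b := by
  obtain ⟨l, hl⟩ := (hG.1 b).exists
  have hblock : ∀ k, |∑ e ∈ G k, (charMatrix G - B) e b| =
      (if b ∈ G k then crossMass G B b else 0) + if b ∈ G k then 0 else ∑ e ∈ G k, B e b := by
    intro k
    split_ifs with hbk
    · rw [hG.sum_charMatrix_sub_apply_of_mem hB1 hbk, abs_of_nonneg (crossMass_nonneg hB b),
        add_zero]
    · simp only [Matrix.sub_apply, Finset.sum_sub_distrib, hG.sum_charMatrix_apply, if_neg hbk,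
        zero_sub, abs_neg, zero_add]
      exact abs_of_nonneg (Finset.sum_nonneg fun e _ => hB e b)
  rw [Finset.sum_congr rfl fun k _ => hblock k, Finset.sum_add_distrib, hG.sum_ite_mem hl,
    ← crossMass, two_mul]

lemma sum_abs_charMatrix_mul_sub_apply (hG : IsPartition G) (hB : ∀ a b, 0 ≤ B a b)
    (hB1 : ∀ b, ∑ e, B e b = 1) :
    ∑ a, ∑ b, |(charMatrix G * (charMatrix G - B)) a b| = 2 * offDiagSum G B := by
  rw [hG.offDiagSum_eq_sum_crossMass hB, Finset.mul_sum, Finset.sum_comm]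
  refine Finset.sum_congr rfl fun b _ => ?_
  rw [← hG.sum_abs_sum_charMatrix_sub_apply hB hB1 b, ← hG.sum_sum_eq_sum]
  refine Finset.sum_congr rfl fun k _ => ?_
  rw [Finset.sum_congr rfl fun a ha => by rw [hG.charMatrix_mul_apply_of_mem ha], Finset.sum_const,
    nsmul_eq_mul, abs_mul, abs_inv, Nat.abs_cast, ← mul_assoc, hG.card_mul_inv_card, one_mul]

lemma mip_charMatrix_sub_le (hG : IsPartition G) (hB : ∀ a b, 0 ≤ B a b)
    (hB1 : ∀ b, ∑ e, B e b = 1) :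
    mip (charMatrix G) (charMatrix G - B) ≤ offDiagSum G B / minCard G := by
  rw [mip_eq_trace_transpose_mul, charMatrix_transpose, Matrix.trace, ← hG.sum_sum_eq_sum,
    hG.offDiagSum_eq_sum_crossMass hB, ← hG.sum_sum_eq_sum, Finset.sum_div]
  refine Finset.sum_le_sum fun k _ => ?_
  rw [Finset.sum_div]
  refine Finset.sum_le_sum fun b hb => ?_
  rw [Matrix.diag_apply, hG.charMatrix_mul_apply_of_mem hb,
    hG.sum_charMatrix_sub_apply_of_mem hB1 hb, div_eq_inv_mul]
  exact mul_le_mul_of_nonneg_right (hG.inv_card_le_inv_minCard k) (crossMass_nonneg hB b)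

lemma abs_mip_charMatrix_mul_sub_le (hG : IsPartition G) (hB : ∀ a b, 0 ≤ B a b)
    (hB1 : ∀ b, ∑ e, B e b = 1) (W : Matrix (Fin n) (Fin n) ℝ) :
    |mip (charMatrix G * W + charMatrix G * W * (1 - charMatrix G)) (charMatrix G - B)| ≤
      6 * infNorm (charMatrix G * W) * offDiagSum G B := by
  set P := charMatrix G
  set N := P * W + P * W * (1 - P)
  have hPP : P * P = P := hG.charMatrix_mul_self
  have hPN : P * N = N := by
    simp only [N, Matrix.mul_add, ← Matrix.mul_assoc, hPP]
  have hN : ∀ a b, |N a b| ≤ 3 * infNorm (P * W) := by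
    intro a b
    have hPW := abs_apply_le_infNorm (P * W) a b
    have hPWP :=
      abs_mul_apply_le_infNorm (P * W) charMatrix_nonneg hG.sum_charMatrix_apply_left a b
    have hNab : N a b = 2 * (P * W) a b - (P * W * P) a b := by
      simp only [N, Matrix.mul_sub, Matrix.mul_one, Matrix.add_apply, Matrix.sub_apply]
      ring
    rw [hNab]
    calc |2 * (P * W) a b - (P * W * P) a b| ≤ 2 * |(P * W) a b| + |(P * W * P) a b| := by
          simpa [abs_mul] using abs_sub (2 * (P * W) a b) ((P * W * P) a b)
      _ ≤ 3 * infNorm (P * W) := by linarith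
  calc |mip N (P - B)| = |mip N (P * (P - B))| := by
        rw [← hPN, mip_mul_left, charMatrix_transpose, hPN]
    _ ≤ 3 * infNorm (P * W) * ∑ a, ∑ b, |(P * (P - B)) a b| := abs_mip_le_of_abs_apply_le hN
    _ = 6 * infNorm (P * W) * offDiagSum G B := by
        rw [hG.sum_abs_charMatrix_mul_sub_apply hB hB1]
        ring

lemma trace_compress_charMatrix_le (hG : IsPartition G) (hB : ∀ a b, 0 ≤ B a b)
    (hB1 : ∀ b, ∑ e, B e b = 1) :
    ((1 - charMatrix G) * B * (1 - charMatrix G)).trace ≤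
      offDiagSum G B / minCard G + (B.trace - K) := by
  rw [trace_compress_eq charMatrix_transpose hG.charMatrix_mul_self, hG.trace_charMatrix]
  linarith [hG.mip_charMatrix_sub_le hB hB1]

end IsPartition

/-- **Lemma B.3 (deterministic control).** For any symmetric `W` and any `B ∈ C`,
`|⟨W, B* − B⟩|` is controlled by `|B*W|_∞` and `|W|_op`. -/
theorem deterministic_control (n K : ℕ) (G : Fin K → Finset (Fin n))
    (hG : IsPartition G) (W : Matrix (Fin n) (Fin n) ℝ) (hW : W.IsSymm)
    (B : Matrix (Fin n) (Fin n) ℝ) (hB : B ∈ Cset n) :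
    |mip W (charMatrix G - B)| ≤
      6 * infNorm (charMatrix G * W) * offDiagSum G B +
        opNorm W * (offDiagSum G B / (minCard G : ℝ) + (B.trace - (K : ℝ))) := by
  obtain ⟨-, ⟨hB0, hBsymm, -, hBrow, hBpsd⟩⟩ := Set.mem_iUnion.1 hB
  have hB1 : ∀ b, ∑ a, B a b = 1 := fun b => by
    simpa [Matrix.mulVec, dotProduct, ← hBsymm.apply] using congrFun hBrow b
  set P := charMatrix G
  have hPT : Pᵀ = P := charMatrix_transpose
  have hS := posSemidef_compress hPT hBpsd
  rw [mip_sub_eq_of_idempotent hPT hG.charMatrix_mul_self hW hBsymm]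
  calc _ ≤ |mip (P * W + P * W * (1 - P)) (P - B)| + |mip W ((1 - P) * B * (1 - P))| :=
        abs_sub _ _
    _ ≤ _ := add_le_add (hG.abs_mip_charMatrix_mul_sub_le hB0 hB1 W)
        ((abs_mip_le_opNorm_mul_trace W _ hS).trans (mul_le_mul_of_nonneg_left
          (hG.trace_compress_charMatrix_le hB0 hB1) (opNorm_nonneg W)))

end Clustering
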